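/- (Off-diagonal entries of the precision matrix for hollow interaction matrices) Let H be an N×N complex matrix with zero diagonal (H j j = 0 for all j) such that I − H is invertible, let d : Fin N → ℝ with d k > 0 for all k, and set Φ = (I − H)⁻¹ · diag(d) · ((I − H)⁻¹)ᴴ. Then for all i ≠ j, (Φ⁻¹) j i = −H j i / d j − conj(H i j) / d i + Σ_{k ≠ i, k ≠ j} conj(H k j) · H k i / d k. -/

import Mathlib

/-! Inverting the congruence gives `Φ⁻¹ = (I - H)ᴴ diag(1/d) (I - H)`. As `H` is hollow, `I - H`
has unit diagonal, so in the sum over `k` for the `(j, i)` entry the terms `k = j` and `k = i`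
give the two linear terms and the remaining ones the quadratic sum. -/

open Matrix

theorem Finset.sum_univ_eq_add_add_sum_filter_ne {ι M : Type*} [Fintype ι] [DecidableEq ι]
    [AddCommMonoid M] (f : ι → M) {i j : ι} (hij : i ≠ j) :
    ∑ k, f k = f i + f j + ∑ k ∈ univ.filter (fun k => k ≠ i ∧ k ≠ j), f k := by
  have hfilter : univ.filter (fun k => k ≠ i ∧ k ≠ j) = (univ.erase i).erase j := by
    ext k
    simp [and_comm]
  rw [hfilter, add_assoc, add_sum_erase _ _ (mem_erase.2 ⟨hij.symm, mem_univ j⟩),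
    add_sum_erase _ _ (mem_univ i)]

namespace Matrix

variable {n α : Type*} [Fintype n] [DecidableEq n]

theorem inv_mul_mul_conjTranspose_inv [CommRing α] [StarRing α] {A : Matrix n n α}
    (hA : IsUnit A.det) (D : Matrix n n α) :
    (A⁻¹ * D * A⁻¹ᴴ)⁻¹ = Aᴴ * D⁻¹ * A := by
  have hAH : IsUnit Aᴴ.det := by rwa [det_conjTranspose, isUnit_star]
  rw [mul_inv_rev, mul_inv_rev, conjTranspose_nonsing_inv, nonsing_inv_nonsing_inv _ hAH,
    nonsing_inv_nonsing_inv _ hA, Matrix.mul_assoc]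

theorem inv_diagonal_of_ne_zero [Field α] {v : n → α} (hv : ∀ i, v i ≠ 0) :
    (diagonal v)⁻¹ = diagonal v⁻¹ :=
  inv_eq_right_inv <| by
    rw [diagonal_mul_diagonal, ← diagonal_one]
    exact congrArg diagonal (funext fun i => mul_inv_cancel₀ (hv i))

theorem conjTranspose_mul_diagonal_mul_apply [NonUnitalSemiring α] [StarRing α]
    (A : Matrix n n α) (v : n → α) (i j : n) :
    (Aᴴ * diagonal v * A) i j = ∑ k, star (A k i) * v k * A k j := by
  rw [mul_apply]
  simp only [mul_diagonal, conjTranspose_apply]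

theorem conjTranspose_one_sub_mul_diagonal_mul_one_sub_apply_of_ne [CommRing α] [StarRing α]
    {H : Matrix n n α} (hH : ∀ k, H k k = 0) (v : n → α) {i j : n} (hij : i ≠ j) :
    ((1 - H : Matrix n n α)ᴴ * diagonal v * (1 - H)) j i =
      -(v j * H j i) - star (H i j) * v i +
        ∑ k ∈ Finset.univ.filter (fun k => k ≠ i ∧ k ≠ j), star (H k j) * v k * H k i := by
  have hdiag : ∀ k, (1 - H) k k = 1 := fun k => by simp [hH k]
  have hoff : ∀ {k l}, k ≠ l → (1 - H) k l = -H k l := fun h => by simp [one_apply_ne h]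
  rw [conjTranspose_mul_diagonal_mul_apply, Finset.sum_univ_eq_add_add_sum_filter_ne _ hij,
    hdiag, hdiag, hoff hij, hoff hij.symm]
  congr 1
  · simp only [star_neg, star_one]
    ring
  · refine Finset.sum_congr rfl fun k hk => ?_
    obtain ⟨hki, hkj⟩ := (Finset.mem_filter.1 hk).2
    rw [hoff hki, hoff hkj, star_neg]
    ring

end Matrix

theorem precision_offdiag_formula_general
    (N : ℕ) (H : Matrix (Fin N) (Fin N) ℂ)
    (hhollow : ∀ j, H j j = 0) (hinv : IsUnit (1 - H))
    (d : Fin N → ℝ) (hd : ∀ k, 0 < d k)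
    (i j : Fin N) (hij : i ≠ j) :
    ((((1 - H)⁻¹ * Matrix.diagonal (fun k => ((d k : ℝ) : ℂ)) * ((1 - H)⁻¹)ᴴ)⁻¹ : Matrix (Fin N) (Fin N) ℂ)) j i =
      -(H j i) / (d j : ℂ) - (starRingEnd ℂ) (H i j) / (d i : ℂ) +
        ∑ k ∈ Finset.univ.filter (fun k => k ≠ i ∧ k ≠ j),
          (starRingEnd ℂ) (H k j) * H k i / (d k : ℂ) := by
  have hd0 : ∀ k, ((d k : ℝ) : ℂ) ≠ 0 := fun k => Complex.ofReal_ne_zero.2 (hd k).ne'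
  rw [inv_mul_mul_conjTranspose_inv ((isUnit_iff_isUnit_det _).1 hinv),
    inv_diagonal_of_ne_zero hd0,
    conjTranspose_one_sub_mul_diagonal_mul_one_sub_apply_of_ne hhollow _ hij]
  simp only [Pi.inv_apply, starRingEnd_apply, div_eq_mul_inv]
  congr 1
  · ring
  · refine Finset.sum_congr rfl fun k _ => ?_
    ring

/-- **Off-diagonal entries of the precision matrix for hollow interaction matrices**:
for `H` with zero diagonal, `I − H` invertible, and `Φ = (I − H)⁻¹ diag(d) ((I − H)⁻¹)ᴴ`,
the off-diagonal entries of `Φ⁻¹` are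
`(Φ⁻¹) j i = −H j i / d j − conj(H i j) / d i + Σ_{k ≠ i, j} conj(H k j) H k i / d k`. -/
theorem precision_offdiag_formula
    (N : ℕ) (hN : 1 ≤ N) (H : Matrix (Fin N) (Fin N) ℂ)
    (hhollow : ∀ j, H j j = 0) (hinv : IsUnit (1 - H))
    (d : Fin N → ℝ) (hd : ∀ k, 0 < d k)
    (i j : Fin N) (hij : i ≠ j) :
    ((((1 - H)⁻¹ * Matrix.diagonal (fun k => ((d k : ℝ) : ℂ)) * ((1 - H)⁻¹)ᴴ)⁻¹ : Matrix (Fin N) (Fin N) ℂ)) j i =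
      -(H j i) / (d j : ℂ) - (starRingEnd ℂ) (H i j) / (d i : ℂ) +
        ∑ k ∈ Finset.univ.filter (fun k => k ≠ i ∧ k ≠ j),
          (starRingEnd ℂ) (H k j) * H k i / (d k : ℂ) :=
  precision_offdiag_formula_general N H hhollow hinv d hd i j hij
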